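/- Fix z ∈ [k]^n and let A be a random symmetric {0,1} matrix with zero diagonal whose entries A_{ij}, 1 ≤ i < j ≤ n, are independent Bernoulli(ρ S_{z_i z_j}). For e ∈ [k]^n and a,b ∈ [k] let W_{ab}(e,z) = o_{ab}(e)/n² − E[o_{ab}(e)]/n² − o_{ab}(z)/n² + E[o_{ab}(z)]/n². Then for every x > 0, P( |W_{ab}(e,z)| > x ) ≤ 2 exp( −x n² + 6 ρ s_max d(e,z) n ), where d(e,z) = #{i : e_i ≠ z_i}. -/

import Mathlib

open Finset Filter
open scoped Classical BigOperators Topology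

noncomputable section

namespace SBM

variable {n k : ℕ}

/-- Number of nodes with label `a`. -/
def nCount (z : Fin n → Fin k) (a : Fin k) : ℕ :=
  (Finset.univ.filter fun i => z i = a).card

/-- `n_{ab}(z)`. -/
def nab (z : Fin n → Fin k) (a b : Fin k) : ℝ :=
  if a = b then (nCount z a : ℝ) * ((nCount z a : ℝ) - 1)
  else (nCount z a : ℝ) * (nCount z b : ℝ)

/-- `o_{ab}(z)`: number of (ordered) edges between communities `a` and `b`. -/
def oab (A : Fin n → Fin n → Bool) (z : Fin n → Fin k) (a b : Fin k) : ℝ :=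
  ∑ i : Fin n, ∑ j : Fin n, if z i = a ∧ z j = b ∧ A i j = true then (1 : ℝ) else 0

/-- `τ(x) = x log x + (1-x) log(1-x)` (with `Real.log 0 = 0`, so `0 log 0 = 0`). -/
def tau (x : ℝ) : ℝ := x * Real.log x + (1 - x) * Real.log (1 - x)

/-- Maximum likelihood modularity. -/
def QML (A : Fin n → Fin n → Bool) (z : Fin n → Fin k) : ℝ :=
  (1 / (2 * (n : ℝ) ^ 2)) *
    ∑ a : Fin k, ∑ b : Fin k, nab z a b * tau (oab A z a b / nab z a b)

/-- The Beta function. -/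
def Beta (x y : ℝ) : ℝ := Real.Gamma x * Real.Gamma y / Real.Gamma (x + y)

def otilde (A : Fin n → Fin n → Bool) (z : Fin n → Fin k) (a b : Fin k) : ℝ :=
  if a = b then oab A z a b / 2 else oab A z a b

def ntilde (z : Fin n → Fin k) (a b : Fin k) : ℝ :=
  if a = b then nab z a b / 2 else nab z a b

/-- Integrated conditional likelihood modularity. -/
def QICL (A : Fin n → Fin n → Bool) (z : Fin n → Fin k) : ℝ :=
  (1 / (n : ℝ) ^ 2) *
    ∑ p ∈ Finset.univ.filter (fun p : Fin k × Fin k => p.1 ≤ p.2),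
      Real.log (Beta (otilde A z p.1 p.2 + 1 / 2)
          (ntilde z p.1 p.2 - otilde A z p.1 p.2 + 1 / 2) / Beta (1 / 2) (1 / 2))

/-- The adjacency matrix is symmetric with zero diagonal. -/
def ValidAdj (A : Fin n → Fin n → Bool) : Prop :=
  (∀ i j, A i j = A j i) ∧ ∀ i, A i i = false

/-- Density of the conditional SBM edge model given the labels `z`:
independent Bernoulli(`ρ S (z i) (z j)`) edges for `i < j`. -/
def edgeDensity (ρ : ℝ) (S : Matrix (Fin k) (Fin k) ℝ) (z : Fin n → Fin k)
    (A : Fin n → Fin n → Bool) : ℝ :=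
  ∏ p ∈ Finset.univ.filter (fun p : Fin n × Fin n => p.1 < p.2),
    (if A p.1 p.2 then ρ * S (z p.1) (z p.2) else 1 - ρ * S (z p.1) (z p.2))

/-- Conditional probability of an event on the adjacency matrix, given labels `z`. -/
def condProb (ρ : ℝ) (S : Matrix (Fin k) (Fin k) ℝ) (z : Fin n → Fin k)
    (E : (Fin n → Fin n → Bool) → Prop) : ℝ :=
  ∑ A : Fin n → Fin n → Bool, if ValidAdj A ∧ E A then edgeDensity ρ S z A else 0

/-- Conditional expectation of a function of the adjacency matrix, given labels `z`. -/
def condExp (ρ : ℝ) (S : Matrix (Fin k) (Fin k) ℝ) (z : Fin n → Fin k)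
    (f : (Fin n → Fin n → Bool) → ℝ) : ℝ :=
  ∑ A : Fin n → Fin n → Bool, if ValidAdj A then edgeDensity ρ S z A * f A else 0

/-- Probability of an event under the SBM: labels are i.i.d. `π`, edges are conditionally
independent Bernoulli(`ρ S (z i) (z j)`). -/
def sbmProb (π : Fin k → ℝ) (ρ : ℝ) (S : Matrix (Fin k) (Fin k) ℝ)
    (E : (Fin n → Fin k) → (Fin n → Fin n → Bool) → Prop) : ℝ :=
  ∑ z : Fin n → Fin k, (∏ i, π (z i)) * condProb ρ S z (E z)

/-- Number of disagreements between two label vectors. -/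
def hamming (e z : Fin n → Fin k) : ℕ :=
  (Finset.univ.filter fun i => e i ≠ z i).card

/-- Misclassification distance: minimum number of disagreements over permutations of labels. -/
def mDist (e z : Fin n → Fin k) : ℕ :=
  Finset.univ.inf' ⟨Equiv.refl (Fin k), Finset.mem_univ _⟩
    (fun σ : Equiv.Perm (Fin k) => (Finset.univ.filter fun i => e i ≠ σ (z i)).card)

/-- Confusion matrix `R(e,z)`. -/
def confusion (e z : Fin n → Fin k) : Matrix (Fin k) (Fin k) ℝ :=
  Matrix.of fun a b => (1 / (n : ℝ)) * ∑ i : Fin n, if e i = a ∧ z i = b then (1 : ℝ) else 0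

/-- `[R 1]_a` : row sums. -/
def rowSum (R : Matrix (Fin k) (Fin k) ℝ) (a : Fin k) : ℝ := ∑ j, R a j

/-- `[Rᵀ 1]_a` : column sums. -/
def colSum (R : Matrix (Fin k) (Fin k) ℝ) (a : Fin k) : ℝ := ∑ i, R i a

/-- `[P_R]_{ab}`. -/
def PR (P R : Matrix (Fin k) (Fin k) ℝ) (n : ℕ) (a b : Fin k) : ℝ :=
  ((R * P * R.transpose) a b - (if a = b then (∑ i, P i i * R a i) / n else 0)) /
    (rowSum R a * (rowSum R b - if a = b then 1 / (n : ℝ) else 0))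

/-- The population modularity `H_{P,n}(R)`. -/
def Hmod (P R : Matrix (Fin k) (Fin k) ℝ) (n : ℕ) : ℝ :=
  (1 / 2) * ∑ a : Fin k, ∑ b : Fin k,
    rowSum R a * (rowSum R b - if a = b then 1 / (n : ℝ) else 0) * tau (PR P R n a b)

/-- The centered modularity `X(e,z)` (with `P = ρ S`). -/
def Xfun (ρ : ℝ) (S : Matrix (Fin k) (Fin k) ℝ) (A : Fin n → Fin n → Bool)
    (e z : Fin n → Fin k) : ℝ :=
  (1 / (2 * (n : ℝ) ^ 2)) * ∑ a : Fin k, ∑ b : Fin k,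
    nab e a b * (tau (oab A e a b / nab e a b) - tau (PR (ρ • S) (confusion e z) n a b))

/-- The limit functional `G_S(R)` (terms with `[RSRᵀ]_{ab} = 0` vanish). -/
def GS (S R : Matrix (Fin k) (Fin k) ℝ) : ℝ :=
  ∑ a : Fin k, ∑ b : Fin k,
    (R * S * R.transpose) a b *
      Real.log ((R * S * R.transpose) a b / (rowSum R a * rowSum R b))

/-- Entry-wise `ℓ¹` norm of a matrix. -/
def l1norm (M : Matrix (Fin k) (Fin k) ℝ) : ℝ := ∑ a : Fin k, ∑ b : Fin k, |M a b|

/-- `s_max`. -/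
def sMax (S : Matrix (Fin k) (Fin k) ℝ) : ℝ :=
  sSup (Set.range fun p : Fin k × Fin k => S p.1 p.2)

/-- `s_min`. -/
def sMin (S : Matrix (Fin k) (Fin k) ℝ) : ℝ :=
  sInf (Set.range fun p : Fin k × Fin k => S p.1 p.2)

/-- `H_t(p‖q) = (1-t)p + tq - p^{1-t} q^t`. -/
def Ht (t p q : ℝ) : ℝ := (1 - t) * p + t * q - p ^ (1 - t) * q ^ t

/-- `max_{t ∈ [0,1]} Σ_a π_a H_t(S_{ab} ‖ S_{ab'})`. -/
def CtMax (π : Fin k → ℝ) (S : Matrix (Fin k) (Fin k) ℝ) (b b' : Fin k) : ℝ :=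
  sSup ((fun t => ∑ a : Fin k, π a * Ht t (S a b) (S a b')) '' Set.Icc (0 : ℝ) 1)

/-- The phase-transition constant `C(π,S)`. -/
def Cconst (π : Fin k → ℝ) (S : Matrix (Fin k) (Fin k) ℝ) : ℝ :=
  sInf {x : ℝ | ∃ b b' : Fin k, b ≠ b' ∧ x = CtMax π S b b'}

/-- `K_t(p‖q) = p^{1-t} q^t + t p log(p/q) - p`. -/
def Kt (t p q : ℝ) : ℝ := p ^ (1 - t) * q ^ t + t * p * Real.log (p / q) - p

/-- `K₁(p‖q) = p log(p/q) + q - p`. -/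
def K1 (p q : ℝ) : ℝ := p * Real.log (p / q) + q - p

/-- Kullback–Leibler divergence between Bernoulli(s) and Bernoulli(t). -/
def KLBern (s t : ℝ) : ℝ := s * Real.log (s / t) + (1 - s) * Real.log ((1 - s) / (1 - t))

/-- Off-diagonal pairs of labels. -/
def offDiag (k : ℕ) : Finset (Fin k × Fin k) :=
  Finset.univ.filter fun p => p.1 ≠ p.2

/-- `C_t(R,S) = Σ_a Σ_{b ≠ b'} [Rᵀ1]_a K_t(S_{ab}‖S_{ab'}) R_{b'b}`. -/
def CtRS (t : ℝ) (R S : Matrix (Fin k) (Fin k) ℝ) : ℝ :=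
  ∑ a : Fin k, ∑ p ∈ offDiag k, colSum R a * Kt t (S a p.1) (S a p.2) * R p.2 p.1

/-- Membership in `F(n,α)`: all communities have size at least `α n`. -/
def inF (α : ℝ) (z : Fin n → Fin k) : Prop := ∀ a, α * n ≤ (nCount z a : ℝ)

/-- `zh` is a maximizer of the ML modularity over `F(n,α)`. -/
def IsMLE (α : ℝ) (A : Fin n → Fin n → Bool) (zh : Fin n → Fin k) : Prop :=
  inF α zh ∧ ∀ e : Fin n → Fin k, inF α e → QML A e ≤ QML A zh

/-- `zh` is a maximizer of the ICL modularity over `F(n,α)`. -/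
def IsICL (α : ℝ) (A : Fin n → Fin n → Bool) (zh : Fin n → Fin k) : Prop :=
  inF α zh ∧ ∀ e : Fin n → Fin k, inF α e → QICL A e ≤ QICL A zh

open Real

/-!
Through its strict upper triangle `B`, the adjacency matrix has independent Bernoulli(`p_q`)
entries, `p_q = ρ S_{z_i z_j}`, and `n² W_{ab}(e,z) = Σ_q c_q (B_q - p_q)` where
`c_q ∈ [-2, 2]` vanishes unless an endpoint of `q` is misclassified, which leaves at most
`d(e,z) n` nonzero coefficients. Chernoff's bound `P(|X| > t) ≤ e^{-t} (E e^X + E e^{-X})`, the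
Bernoulli estimate `E e^{c(B - p)} ≤ exp (p (e^c - 1 - c))` and `e^c - 1 - c ≤ 6` on `[-2, 2]`
finish the proof.
-/

section BernoulliProduct

variable {ι : Type*} [Fintype ι]

def bernoulliWeight (p : ι → ℝ) (B : ι → Bool) : ℝ :=
  ∏ i, if B i then p i else 1 - p i

lemma bernoulliWeight_nonneg {p : ι → ℝ} (hp0 : ∀ i, 0 ≤ p i) (hp1 : ∀ i, p i ≤ 1)
    (B : ι → Bool) : 0 ≤ bernoulliWeight p B :=
  prod_nonneg fun i _ => by split <;> linarith [hp0 i, hp1 i]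

variable [DecidableEq ι]

lemma sum_prod_apply_bool (F : ι → Bool → ℝ) :
    ∑ B : ι → Bool, ∏ i, F i (B i) = ∏ i, (F i true + F i false) := by
  rw [← Fintype.prod_sum]
  simp

lemma sum_bernoulliWeight_mul_ite (p : ι → ℝ) (i : ι) :
    ∑ B, bernoulliWeight p B * (if B i then 1 else 0) = p i := by
  have hfactor : ∀ B : ι → Bool, bernoulliWeight p B * (if B i then 1 else 0) =
      ∏ j, (if B j then p j else 1 - p j) * (if j = i then (if B j then 1 else 0) else 1) := by
    intro B
    rw [prod_mul_distrib, prod_ite_eq' univ i]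
    simp [bernoulliWeight]
  simp_rw [hfactor]
  rw [sum_prod_apply_bool (fun j b => (if b then p j else 1 - p j) *
    (if j = i then (if b then 1 else 0) else 1)), prod_eq_single i (fun j _ hj => by simp [hj])
    (by simp)]
  simp

lemma sum_bernoulliWeight_mul_sum (p c : ι → ℝ) :
    ∑ B, bernoulliWeight p B * ∑ i, c i * (if B i then 1 else 0) = ∑ i, c i * p i := by
  simp_rw [mul_sum]
  rw [sum_comm]
  refine sum_congr rfl fun i _ => ?_
  rw [← sum_bernoulliWeight_mul_ite p i, mul_sum]
  exact sum_congr rfl fun B _ => by ring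

lemma bernoulli_mgf_le (p c : ℝ) :
    p * exp (c * (1 - p)) + (1 - p) * exp (c * -p) ≤ exp (p * (exp c - 1 - c)) :=
  calc p * exp (c * (1 - p)) + (1 - p) * exp (c * -p)
      = exp (-(c * p)) * (1 + p * (exp c - 1)) := by
        rw [show c * (1 - p) = c + -(c * p) by ring, exp_add, mul_neg]
        ring
    _ ≤ exp (-(c * p)) * exp (p * (exp c - 1)) := by
        gcongr
        linarith [add_one_le_exp (p * (exp c - 1))]
    _ = exp (p * (exp c - 1 - c)) := by
        rw [← exp_add]
        ring_nf

lemma sum_bernoulliWeight_mul_exp_le {p : ι → ℝ} (hp0 : ∀ i, 0 ≤ p i) (hp1 : ∀ i, p i ≤ 1)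
    (c : ι → ℝ) :
    ∑ B, bernoulliWeight p B * exp (∑ i, c i * ((if B i then 1 else 0) - p i))
      ≤ exp (∑ i, p i * (exp (c i) - 1 - c i)) := by
  simp_rw [exp_sum, bernoulliWeight, ← prod_mul_distrib]
  rw [sum_prod_apply_bool (fun i b => (if b then p i else 1 - p i) *
    exp (c i * ((if b then 1 else 0) - p i)))]
  refine prod_le_prod (fun i _ => ?_) (fun i _ => ?_)
  · simp only [if_true, Bool.false_eq_true, if_false]
    exact add_nonneg (mul_nonneg (hp0 i) (exp_pos _).le)
      (mul_nonneg (sub_nonneg.2 (hp1 i)) (exp_pos _).le)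
  · simpa using bernoulli_mgf_le (p i) (c i)

lemma one_le_exp_sub_add_exp_neg_sub {X t : ℝ} (h : t ≤ |X|) :
    1 ≤ exp (X - t) + exp (-X - t) := by
  rcases abs_cases X with ⟨hX, -⟩ | ⟨hX, -⟩
  · linarith [one_le_exp (show 0 ≤ X - t by linarith), exp_pos (-X - t)]
  · linarith [one_le_exp (show 0 ≤ -X - t by linarith), exp_pos (X - t)]

lemma sum_bernoulliWeight_mul_tail_le {p : ι → ℝ} (hp0 : ∀ i, 0 ≤ p i) (hp1 : ∀ i, p i ≤ 1)
    (c : ι → ℝ) {x N M : ℝ} (hN : 0 ≤ N)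
    (hpos : ∑ i, p i * (exp (c i) - 1 - c i) ≤ M)
    (hneg : ∑ i, p i * (exp (-c i) - 1 - -c i) ≤ M) :
    ∑ B, bernoulliWeight p B *
        (if x < |(∑ i, c i * ((if B i then 1 else 0) - p i)) / N| then 1 else 0)
      ≤ 2 * exp (-(x * N) + M) := by
  set X : (ι → Bool) → ℝ := fun B => ∑ i, c i * ((if B i then 1 else 0) - p i) with hX
  have hind : ∀ B, (if x < |X B / N| then (1 : ℝ) else 0)
      ≤ exp (-(x * N)) * (exp (X B) + exp (-X B)) := by
    intro B
    split_ifs with h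
    · have hxN : x * N ≤ |X B| := by
        rw [abs_div, abs_of_nonneg hN] at h
        rcases hN.eq_or_lt with rfl | hN
        · simp -- junk division: for `N = 0` the event reads `x < 0`
        · exact ((lt_div_iff₀ hN).1 h).le
      calc (1 : ℝ) ≤ exp (X B - x * N) + exp (-X B - x * N) :=
            one_le_exp_sub_add_exp_neg_sub hxN
        _ = exp (-(x * N)) * (exp (X B) + exp (-X B)) := by
            rw [mul_add, ← exp_add, ← exp_add]
            ring_nf
    · positivity
  have hmgf_pos : ∑ B, bernoulliWeight p B * exp (X B) ≤ exp M :=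
    (sum_bernoulliWeight_mul_exp_le hp0 hp1 c).trans (exp_le_exp.2 hpos)
  have hmgf_neg : ∑ B, bernoulliWeight p B * exp (-X B) ≤ exp M := by
    have hnegX : ∀ B, -X B = ∑ i, -c i * ((if B i then 1 else 0) - p i) := fun B => by
      simp only [hX, ← sum_neg_distrib, neg_mul]
    simp_rw [hnegX]
    exact (sum_bernoulliWeight_mul_exp_le hp0 hp1 fun i => -c i).trans (exp_le_exp.2 hneg)
  calc ∑ B, bernoulliWeight p B * (if x < |X B / N| then 1 else 0)
      ≤ ∑ B, bernoulliWeight p B * (exp (-(x * N)) * (exp (X B) + exp (-X B))) :=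
        sum_le_sum fun B _ => mul_le_mul_of_nonneg_left (hind B) (bernoulliWeight_nonneg hp0 hp1 B)
    _ = exp (-(x * N)) * (∑ B, bernoulliWeight p B * exp (X B)
          + ∑ B, bernoulliWeight p B * exp (-X B)) := by
        rw [← sum_add_distrib, mul_sum]
        exact sum_congr rfl fun B _ => by ring
    _ ≤ exp (-(x * N)) * (exp M + exp M) := by gcongr
    _ = 2 * exp (-(x * N) + M) := by
        rw [exp_add]
        ring

end BernoulliProduct

section UpperTriangle

variable {n k : ℕ}

abbrev UpperPair (n : ℕ) := {q : Fin n × Fin n // q.1 < q.2}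

def adjOfUpper (B : UpperPair n → Bool) : Fin n → Fin n → Bool := fun i j =>
  if h : i < j then B ⟨(i, j), h⟩ else if h' : j < i then B ⟨(j, i), h'⟩ else false

lemma adjOfUpper_fst_snd (B : UpperPair n → Bool) (q : UpperPair n) :
    adjOfUpper B q.1.1 q.1.2 = B q := by
  simp [adjOfUpper, q.2]

lemma adjOfUpper_snd_fst (B : UpperPair n → Bool) (q : UpperPair n) :
    adjOfUpper B q.1.2 q.1.1 = B q := by
  simp [adjOfUpper, q.2, not_lt_of_gt q.2]

lemma validAdj_adjOfUpper (B : UpperPair n → Bool) : ValidAdj (adjOfUpper B) := by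
  refine ⟨fun i j => ?_, fun i => by simp [adjOfUpper]⟩
  rcases lt_trichotomy i j with h | rfl | h
  · simp [adjOfUpper, h, not_lt_of_gt h]
  · rfl
  · simp [adjOfUpper, h, not_lt_of_gt h]

lemma adjOfUpper_restrict {A : Fin n → Fin n → Bool} (hA : ValidAdj A) :
    adjOfUpper (fun q : UpperPair n => A q.1.1 q.1.2) = A := by
  funext i j
  rcases lt_trichotomy i j with h | rfl | h
  · simp [adjOfUpper, h]
  · simp [adjOfUpper, hA.2]
  · simp [adjOfUpper, h, not_lt_of_gt h, hA.1 j i]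

lemma sum_validAdj_eq_sum_upper (f : (Fin n → Fin n → Bool) → ℝ) :
    ∑ A, (if ValidAdj A then f A else 0) = ∑ B : UpperPair n → Bool, f (adjOfUpper B) := by
  rw [← sum_filter]
  refine sum_nbij' (fun A q => A q.1.1 q.1.2) adjOfUpper (by simp)
    (fun B _ => by simp [validAdj_adjOfUpper B]) (fun A hA => adjOfUpper_restrict (mem_filter.1 hA).2)
    (fun B _ => funext (adjOfUpper_fst_snd B)) (fun A hA => ?_)
  rw [adjOfUpper_restrict (mem_filter.1 hA).2]

lemma sum_sum_eq_sum_upperPair (f : Fin n → Fin n → ℝ) (hdiag : ∀ i, f i i = 0) :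
    ∑ i, ∑ j, f i j = ∑ q : UpperPair n, (f q.1.1 q.1.2 + f q.1.2 q.1.1) := by
  have hsplit : ∀ i j, f i j = (if i < j then f i j else 0) + (if j < i then f i j else 0) := by
    intro i j
    rcases lt_trichotomy i j with h | rfl | h
    · simp [h, not_lt_of_gt h]
    · simp [hdiag]
    · simp [h, not_lt_of_gt h]
  calc ∑ i, ∑ j, f i j
      = ∑ i, ∑ j, (if i < j then f i j else 0) + ∑ i, ∑ j, (if i < j then f j i else 0) := by
        conv_lhs => enter [2, i, 2, j]; rw [hsplit i j]
        simp only [sum_add_distrib]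
        rw [sum_comm (f := fun i j => if j < i then f i j else 0)]
    _ = ∑ p : Fin n × Fin n, if p.1 < p.2 then f p.1 p.2 + f p.2 p.1 else 0 := by
        rw [← sum_add_distrib,
          Fintype.sum_prod_type' (f := fun i j => if i < j then f i j + f j i else 0)]
        refine sum_congr rfl fun i _ => ?_
        rw [← sum_add_distrib]
        exact sum_congr rfl fun j _ => by split_ifs <;> simp
    _ = ∑ q : UpperPair n, (f q.1.1 q.1.2 + f q.1.2 q.1.1) := by
        rw [← sum_filter]
        exact sum_subtype _ (by simp) _

end UpperTriangle

section EdgeModel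

variable {n k : ℕ}

def edgeProb (ρ : ℝ) (S : Matrix (Fin k) (Fin k) ℝ) (z : Fin n → Fin k) (q : UpperPair n) : ℝ :=
  ρ * S (z q.1.1) (z q.1.2)

lemma edgeDensity_adjOfUpper (ρ : ℝ) (S : Matrix (Fin k) (Fin k) ℝ) (z : Fin n → Fin k)
    (B : UpperPair n → Bool) :
    edgeDensity ρ S z (adjOfUpper B) = bernoulliWeight (edgeProb ρ S z) B := by
  rw [edgeDensity, prod_subtype (univ.filter fun p : Fin n × Fin n => p.1 < p.2)
    (p := fun p => p.1 < p.2) (by simp)]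
  exact prod_congr rfl fun q _ => by rw [adjOfUpper_fst_snd, edgeProb]

lemma condProb_eq_sum_upper (ρ : ℝ) (S : Matrix (Fin k) (Fin k) ℝ) (z : Fin n → Fin k)
    (E : (Fin n → Fin n → Bool) → Prop) :
    condProb ρ S z E = ∑ B : UpperPair n → Bool,
      bernoulliWeight (edgeProb ρ S z) B * (if E (adjOfUpper B) then 1 else 0) := by
  rw [condProb]
  simp_rw [ite_and]
  rw [sum_validAdj_eq_sum_upper (fun A => if E A then edgeDensity ρ S z A else 0)]
  simp [edgeDensity_adjOfUpper]

lemma condExp_eq_sum_upper (ρ : ℝ) (S : Matrix (Fin k) (Fin k) ℝ) (z : Fin n → Fin k)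
    (f : (Fin n → Fin n → Bool) → ℝ) :
    condExp ρ S z f = ∑ B : UpperPair n → Bool,
      bernoulliWeight (edgeProb ρ S z) B * f (adjOfUpper B) := by
  rw [condExp, sum_validAdj_eq_sum_upper (fun A => edgeDensity ρ S z A * f A)]
  simp [edgeDensity_adjOfUpper]

def pairCount (e : Fin n → Fin k) (a b : Fin k) (q : UpperPair n) : ℝ :=
  (if e q.1.1 = a ∧ e q.1.2 = b then 1 else 0) + (if e q.1.2 = a ∧ e q.1.1 = b then 1 else 0)

lemma oab_adjOfUpper (B : UpperPair n → Bool) (e : Fin n → Fin k) (a b : Fin k) :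
    oab (adjOfUpper B) e a b = ∑ q, pairCount e a b q * (if B q then 1 else 0) := by
  rw [oab, sum_sum_eq_sum_upperPair _ (fun i => by simp [adjOfUpper])]
  refine sum_congr rfl fun q _ => ?_
  rw [adjOfUpper_fst_snd, adjOfUpper_snd_fst, pairCount]
  cases B q <;> simp

lemma condExp_oab (ρ : ℝ) (S : Matrix (Fin k) (Fin k) ℝ) (z e : Fin n → Fin k) (a b : Fin k) :
    condExp ρ S z (fun A => oab A e a b) = ∑ q, pairCount e a b q * edgeProb ρ S z q := by
  rw [condExp_eq_sum_upper]
  simp_rw [oab_adjOfUpper]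
  exact sum_bernoulliWeight_mul_sum _ _

lemma oab_sub_condExp_sub_oab_sub_condExp (ρ : ℝ) (S : Matrix (Fin k) (Fin k) ℝ)
    (z e : Fin n → Fin k) (a b : Fin k) (B : UpperPair n → Bool) :
    oab (adjOfUpper B) e a b - condExp ρ S z (fun A => oab A e a b)
        - (oab (adjOfUpper B) z a b - condExp ρ S z (fun A => oab A z a b))
      = ∑ q, (pairCount e a b q - pairCount z a b q)
          * ((if B q then 1 else 0) - edgeProb ρ S z q) := by
  simp only [oab_adjOfUpper, condExp_oab, ← sum_sub_distrib]
  exact sum_congr rfl fun q _ => by ring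

lemma abs_pairCount_sub_le_two (e z : Fin n → Fin k) (a b : Fin k) (q : UpperPair n) :
    |pairCount e a b q - pairCount z a b q| ≤ 2 := by
  simp only [pairCount, abs_le]
  constructor <;> split_ifs <;> norm_num

lemma pairCount_sub_eq_zero {e z : Fin n → Fin k} (a b : Fin k) {q : UpperPair n}
    (h1 : e q.1.1 = z q.1.1) (h2 : e q.1.2 = z q.1.2) :
    pairCount e a b q - pairCount z a b q = 0 := by
  simp [pairCount, h1, h2]

end EdgeModel

section Deviation

variable {n k : ℕ}

lemma le_sMax (S : Matrix (Fin k) (Fin k) ℝ) (a b : Fin k) : S a b ≤ sMax S :=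
  le_csSup (Set.finite_range _).bddAbove ⟨(a, b), rfl⟩

lemma sMax_nonneg {S : Matrix (Fin k) (Fin k) ℝ} (hS : ∀ a b, 0 ≤ S a b) : 0 ≤ sMax S :=
  Real.sSup_nonneg (by rintro _ ⟨p, rfl⟩; exact hS _ _)

lemma exp_sub_one_sub_le_six {c : ℝ} (hc : |c| ≤ 2) : exp c - 1 - c ≤ 6 := by
  obtain ⟨hc1, hc2⟩ := abs_le.1 hc
  have he2 : exp 2 < 9 := by
    rw [show (2 : ℝ) = 1 + 1 by norm_num, exp_add]
    nlinarith [exp_one_lt_d9, exp_pos 1]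
  rcases le_or_gt c 0 with h | h
  · linarith [exp_le_one_iff.2 h]
  · have h3 : exp c * (3 - c) ≤ exp 2 :=
      calc exp c * (3 - c) ≤ exp c * exp (2 - c) := by
            gcongr
            linarith [add_one_le_exp (2 - c)]
        _ = exp 2 := by rw [← exp_add]; ring_nf
    nlinarith [mul_nonneg (sub_nonneg.2 (one_le_exp h.le)) (sub_nonneg.2 hc2)]

lemma card_upperPair_disagree_le (e z : Fin n → Fin k) :
    (univ.filter fun q : UpperPair n => ¬(e q.1.1 = z q.1.1 ∧ e q.1.2 = z q.1.2)).card
      ≤ hamming e z * n := by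
  set f : UpperPair n → Fin n × Fin n := fun q =>
    if e q.1.1 = z q.1.1 then (q.1.2, q.1.1) else (q.1.1, q.1.2) with hf
  have hrecover : ∀ q : UpperPair n, q.1 = (min (f q).1 (f q).2, max (f q).1 (f q).2) := by
    intro q
    have := q.2.le
    simp only [hf]
    split_ifs <;> simp [this]
  calc _ ≤ ((univ.filter fun i => e i ≠ z i) ×ˢ (univ : Finset (Fin n))).card := by
        refine card_le_card_of_injOn f (fun q hq => ?_)
          (fun q _ q' _ h => Subtype.ext ((hrecover q).trans (h ▸ (hrecover q').symm)))
        simp only [coe_filter, Set.mem_ofPred_eq, not_and] at hq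
        by_cases h : e q.1.1 = z q.1.1 <;> simp [hf, h, hq]
    _ = hamming e z * n := by simp [hamming, card_product]

lemma sum_edgeProb_mul_le {ρ : ℝ} (hρ : 0 ≤ ρ) {S : Matrix (Fin k) (Fin k) ℝ}
    (hS : ∀ a b, 0 ≤ S a b) (z e : Fin n → Fin k) (c : UpperPair n → ℝ)
    (hc : ∀ q, |c q| ≤ 2)
    (hc0 : ∀ q : UpperPair n, e q.1.1 = z q.1.1 → e q.1.2 = z q.1.2 → c q = 0) :
    ∑ q, edgeProb ρ S z q * (exp (c q) - 1 - c q) ≤ 6 * ρ * sMax S * hamming e z * n := by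
  have hρS : 0 ≤ ρ * sMax S := mul_nonneg hρ (sMax_nonneg hS)
  have hterm : ∀ q, edgeProb ρ S z q * (exp (c q) - 1 - c q)
      ≤ 6 * ρ * sMax S * (if ¬(e q.1.1 = z q.1.1 ∧ e q.1.2 = z q.1.2) then 1 else 0) := by
    intro q
    split_ifs with h
    · simp [hc0 q h.1 h.2]
    · calc edgeProb ρ S z q * (exp (c q) - 1 - c q) ≤ ρ * sMax S * 6 :=
            mul_le_mul (mul_le_mul_of_nonneg_left (le_sMax S _ _) hρ)
              (exp_sub_one_sub_le_six (hc q)) (by linarith [add_one_le_exp (c q)]) hρS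
        _ = 6 * ρ * sMax S * 1 := by ring
  calc ∑ q, edgeProb ρ S z q * (exp (c q) - 1 - c q)
      ≤ ∑ q : UpperPair n, 6 * ρ * sMax S *
          (if ¬(e q.1.1 = z q.1.1 ∧ e q.1.2 = z q.1.2) then 1 else 0) :=
        sum_le_sum fun q _ => hterm q
    _ ≤ 6 * ρ * sMax S * (hamming e z * n : ℕ) := by
        rw [← mul_sum, sum_boole]
        gcongr 6 * ρ * sMax S * ?_
        · linarith
        · exact_mod_cast card_upperPair_disagree_le e z
    _ = 6 * ρ * sMax S * hamming e z * n := by push_cast; ring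

end Deviation

theorem stmt15_general (n k : ℕ) (S : Matrix (Fin k) (Fin k) ℝ)
    (hSpos : ∀ a b, 0 < S a b) (ρ : ℝ) (hρ0 : 0 < ρ) (hρ1 : ∀ a b, ρ * S a b < 1)
    (z e : Fin n → Fin k) (a b : Fin k) (x : ℝ) :
    condProb ρ S z (fun A =>
        x < |oab A e a b / (n : ℝ) ^ 2 - condExp ρ S z (fun A' => oab A' e a b) / (n : ℝ) ^ 2
              - oab A z a b / (n : ℝ) ^ 2
              + condExp ρ S z (fun A' => oab A' z a b) / (n : ℝ) ^ 2|)
      ≤ 2 * Real.exp (-(x * (n : ℝ) ^ 2) + 6 * ρ * sMax S * (hamming e z : ℝ) * n) := by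
  set c : UpperPair n → ℝ := fun q => pairCount e a b q - pairCount z a b q
  have hS : ∀ a b, 0 ≤ S a b := fun a b => (hSpos a b).le
  have hc : ∀ q, |c q| ≤ 2 := fun q => abs_pairCount_sub_le_two e z a b q
  have hc0 : ∀ q : UpperPair n, e q.1.1 = z q.1.1 → e q.1.2 = z q.1.2 → c q = 0 :=
    fun q h1 h2 => pairCount_sub_eq_zero a b h1 h2
  have hcentered : ∀ B : UpperPair n → Bool,
      oab (adjOfUpper B) e a b / (n : ℝ) ^ 2
          - condExp ρ S z (fun A' => oab A' e a b) / (n : ℝ) ^ 2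
          - oab (adjOfUpper B) z a b / (n : ℝ) ^ 2
          + condExp ρ S z (fun A' => oab A' z a b) / (n : ℝ) ^ 2
        = (∑ q, c q * ((if B q then 1 else 0) - edgeProb ρ S z q)) / (n : ℝ) ^ 2 := fun B => by
    rw [← oab_sub_condExp_sub_oab_sub_condExp]
    ring
  rw [condProb_eq_sum_upper]
  simp only [hcentered]
  refine sum_bernoulliWeight_mul_tail_le (fun q => (mul_pos hρ0 (hSpos _ _)).le)
    (fun q => (hρ1 _ _).le) c (by positivity) ?_ ?_
  · exact sum_edgeProb_mul_le hρ0.le hS z e c hc hc0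
  · exact sum_edgeProb_mul_le hρ0.le hS z e (fun q => -c q) (fun q => (abs_neg _).trans_le (hc q))
      fun q h1 h2 => neg_eq_zero.2 (hc0 q h1 h2)

/-- concentration for the difference of edge counts of two labelings. -/
theorem stmt15 (n k : ℕ) (S : Matrix (Fin k) (Fin k) ℝ) (hSsym : S.IsSymm)
    (hSpos : ∀ a b, 0 < S a b) (ρ : ℝ) (hρ0 : 0 < ρ) (hρ1 : ∀ a b, ρ * S a b < 1)
    (z e : Fin n → Fin k) (a b : Fin k) (x : ℝ) (hx : 0 < x) :
    condProb ρ S z (fun A =>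
        x < |oab A e a b / (n : ℝ) ^ 2 - condExp ρ S z (fun A' => oab A' e a b) / (n : ℝ) ^ 2
              - oab A z a b / (n : ℝ) ^ 2
              + condExp ρ S z (fun A' => oab A' z a b) / (n : ℝ) ^ 2|)
      ≤ 2 * Real.exp (-(x * (n : ℝ) ^ 2) + 6 * ρ * sMax S * (hamming e z : ℝ) * n) :=
  stmt15_general n k S hSpos ρ hρ0 hρ1 z e a b x

end SBM
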